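/- arXiv:2405.14898 — 2 statements merged into one kernel-verified Lean document; each statement's English description precedes it below -/
import Mathlib

section
/- Let d ≥ 2 and n ≥ 2d+1. Then σ⁻¹(C_n^d) ≥ d(d+1). -/
/-- A coloring `f : V → Fin 2` is balanced if its two color class sizes differ by at most 1. -/
def BalancedColoring {V : Type*} (f : V → Fin 2) : Prop :=
  (Nat.card {v | f v = 0} : ℤ) - (Nat.card {v | f v = 1} : ℤ) ≤ 1 ∧
  (Nat.card {v | f v = 1} : ℤ) - (Nat.card {v | f v = 0} : ℤ) ≤ 1

/-- The set `g(f)` of bichromatic edges of `G` under the coloring `f`. -/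
def bichromatic {V : Type*} (G : SimpleGraph V) (f : V → Fin 2) : Set (Sym2 V) :=
  {e | e ∈ G.edgeSet ∧ Sym2.lift ⟨fun a b => f a ≠ f b, fun a b => by simp [ne_comm]⟩ e}

/-- `|g(f)|`, the number of bichromatic edges. -/
noncomputable def mixedCount {V : Type*} (G : SimpleGraph V) (f : V → Fin 2) : ℕ :=
  (bichromatic G f).ncard

/-- The rna number / minimum bisection width `σ⁻¹(G)`. -/
noncomputable def rna {V : Type*} (G : SimpleGraph V) : ℕ :=
  sInf {k | ∃ f : V → Fin 2, BalancedColoring f ∧ mixedCount G f = k}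

/-- The `d`-th power of the cycle `C_n`, with vertex set `ZMod n`. -/
def cyclePow (n d : ℕ) : SimpleGraph (ZMod n) where
  Adj u v := u ≠ v ∧ ∃ j : ℕ, 1 ≤ j ∧ j ≤ d ∧ (v = u + (j : ZMod n) ∨ u = v + (j : ZMod n))
  symm := ⟨by
    rintro u v ⟨h, j, h1, h2, h3⟩
    exact ⟨h.symm, j, h1, h2, h3.symm⟩⟩
  loopless := ⟨by rintro u ⟨h, -⟩; exact h rfl⟩

/-!
Read a coloring of `C_n^d` as a cyclic word `c : ℕ → Fin 2` of length `n`: the pairs `(x, k)`,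
`1 ≤ k ≤ d`, with `c x ≠ c ((x + k) % n)` inject into the bichromatic edges. For
`n = 2d + 1` the graph is complete, so with `a` and `b` letters of the two colors there are at least
`a * b ≥ d * (d + 1)` such pairs. For larger `n`, rotate the word so that its last letter has the
majority color and delete that letter: both colors keep at least `d` letters, and the number of pairs
does not increase, because a pair wrapping over the deleted position is replaced by a longer one or,
at maximal length `d`, by one of the two pairs through the deleted position.
-/

open Finset

lemma Nat.add_mod_of_lt_of_le {n x k : ℕ} (hx : x < n) (hk : k ≤ n) :
    (x + k) % n = if x + k < n then x + k else x + k - n := by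
  split_ifs with h
  · exact Nat.mod_eq_of_lt h
  · rw [Nat.mod_eq_sub_mod (by omega), Nat.mod_eq_of_lt (by omega)]

lemma Nat.add_mod_add_sub_mod {n x r : ℕ} (hx : x < n) (hr : r ≤ n) :
    ((x + r) % n + (n - r)) % n = x := by
  rw [Nat.mod_add_mod, show x + r + (n - r) = x + n by omega, Nat.add_mod_right,
    Nat.mod_eq_of_lt hx]

lemma Nat.add_sub_mod_add_mod {n x r : ℕ} (hx : x < n) (hr : r ≤ n) :
    ((x + (n - r)) % n + r) % n = x := by
  simpa only [Nat.sub_sub_self hr] using Nat.add_mod_add_sub_mod hx (Nat.sub_le n r)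

lemma ZMod.natCast_eq_natCast_iff_of_lt {n a b : ℕ} (ha : a < n) (hb : b < n) :
    (a : ZMod n) = b ↔ a = b := by
  rw [ZMod.natCast_eq_natCast_iff', Nat.mod_eq_of_lt ha, Nat.mod_eq_of_lt hb]

lemma Finset.card_filter_range_rotate {n r : ℕ} (hr : r ≤ n) (P : ℕ → Prop) [DecidablePred P] :
    #{x ∈ range n | P ((x + r) % n)} = #{x ∈ range n | P x} := by
  refine card_nbij' (fun x => (x + r) % n) (fun x => (x + (n - r)) % n) ?_ ?_ ?_ ?_ <;>
    intro x hx <;> simp only [coe_filter, mem_range, Set.mem_ofPred_eq] at hx ⊢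
  · exact ⟨Nat.mod_lt _ (by omega), hx.2⟩
  · exact ⟨Nat.mod_lt _ (by omega), by rw [Nat.add_sub_mod_add_mod hx.1 hr]; exact hx.2⟩
  · exact Nat.add_mod_add_sub_mod hx.1 hr
  · exact Nat.add_sub_mod_add_mod hx.1 hr

lemma Finset.card_filter_range_product_rotate {β : Type*} {n r : ℕ} (hr : r ≤ n)
    (t : Finset β) (P : ℕ → β → Prop) [∀ x b, Decidable (P x b)] :
    #{p ∈ range n ×ˢ t | P ((p.1 + r) % n) p.2} = #{p ∈ range n ×ˢ t | P p.1 p.2} := by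
  simp only [card_filter, sum_product_right]
  refine sum_congr rfl fun b _ => ?_
  simpa only [card_filter] using card_filter_range_rotate hr (P · b)

section CyclicWord

variable {α : Type*} [DecidableEq α]

def crossPairs (n d : ℕ) (c : ℕ → α) : Finset (ℕ × ℕ) :=
  {p ∈ range n ×ˢ Icc 1 d | c p.1 ≠ c ((p.1 + p.2) % n)}

def colorCount (n : ℕ) (c : ℕ → α) (i : α) : ℕ :=
  #{x ∈ range n | c x = i}

lemma mem_crossPairs {n d : ℕ} {c : ℕ → α} {x k : ℕ} :
    (x, k) ∈ crossPairs n d c ↔ x < n ∧ 1 ≤ k ∧ k ≤ d ∧ c x ≠ c ((x + k) % n) := by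
  simp [crossPairs, and_assoc]

lemma card_crossPairs_rotate {n d r : ℕ} (hr : r ≤ n) (c : ℕ → α) :
    #(crossPairs n d fun x => c ((x + r) % n)) = #(crossPairs n d c) := by
  have h (x k : ℕ) : ((x + k) % n + r) % n = ((x + r) % n + k) % n := by
    rw [Nat.mod_add_mod, Nat.mod_add_mod, Nat.add_right_comm]
  simp only [crossPairs, h]
  exact card_filter_range_product_rotate hr _ fun x k => c x ≠ c ((x + k) % n)

lemma colorCount_rotate {n r : ℕ} (hr : r ≤ n) (c : ℕ → α) (i : α) :
    colorCount n (fun x => c ((x + r) % n)) i = colorCount n c i :=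
  card_filter_range_rotate hr (c · = i)

lemma colorCount_succ (n : ℕ) (c : ℕ → α) (i : α) :
    colorCount (n + 1) c i = colorCount n c i + if c n = i then 1 else 0 := by
  simp only [colorCount, range_add_one, filter_insert]
  split_ifs
  · rw [card_insert_of_notMem (by simp)]
  · rfl

lemma exists_lt_eq_of_colorCount_pos {n : ℕ} {c : ℕ → α} {i : α} (h : 0 < colorCount n c i) :
    ∃ p < n, c p = i := by
  obtain ⟨p, hp⟩ := card_pos.mp h
  simp only [mem_filter, mem_range] at hp
  exact ⟨p, hp⟩

lemma card_crossPairs_le_succ {n d : ℕ} (hd : d ≤ n) (c : ℕ → α) :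
    #(crossPairs n d c) ≤ #(crossPairs (n + 1) d c) := by
  refine card_le_card_of_injOn (fun p =>
    if p.1 + p.2 < n then p
    else if p.2 < d then (p.1, p.2 + 1)
    else if c n = c p.1 then (n, p.1 + d + 1 - n) else (p.1, n - p.1)) ?_ ?_
  · rintro ⟨x, k⟩ hp
    rw [mem_coe, mem_crossPairs] at hp
    obtain ⟨hx, hk1, hkd, hc⟩ := hp
    rw [Nat.add_mod_of_lt_of_le hx (by omega)] at hc
    simp only [mem_coe]
    split_ifs with hwrap hshort hcn
    · rw [mem_crossPairs, Nat.add_mod_of_lt_of_le (by omega) (by omega), if_pos (by omega)]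
      exact ⟨by omega, hk1, hkd, by rwa [if_pos hwrap] at hc⟩
    · rw [mem_crossPairs, Nat.add_mod_of_lt_of_le (by omega) (by omega), if_neg (by omega)]
      refine ⟨by omega, by omega, by omega, ?_⟩
      rw [if_neg hwrap] at hc
      convert hc using 2
      omega
    · rw [mem_crossPairs, Nat.add_mod_of_lt_of_le (by omega) (by omega), if_neg (by omega), hcn]
      refine ⟨by omega, by omega, by omega, ?_⟩
      rw [if_neg hwrap] at hc
      convert hc using 2
      omega
    · rw [mem_crossPairs, Nat.add_mod_of_lt_of_le (by omega) (by omega), if_pos (by omega)]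
      exact ⟨by omega, by omega, by omega, by simpa [Nat.add_sub_cancel' hx.le, eq_comm] using hcn⟩
  · rintro ⟨x, k⟩ hp ⟨x', k'⟩ hp' h
    rw [mem_coe, mem_crossPairs] at hp hp'
    dsimp only at h
    split_ifs at h <;> simp only [Prod.mk.injEq] at h ⊢ <;> omega

lemma colorCount_mul_colorCount_le_card_crossPairs (d : ℕ) (c : ℕ → α) {i j : α} (hij : i ≠ j) :
    colorCount (2 * d + 1) c i * colorCount (2 * d + 1) c j ≤ #(crossPairs (2 * d + 1) d c) := by
  set n := 2 * d + 1
  have hfwd {x y : ℕ} (hx : x < n) (hy : y < n) : (x + (y + (n - x)) % n) % n = y := by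
    rw [Nat.add_mod_mod, show x + (y + (n - x)) = y + n by omega, Nat.add_mod_right,
      Nat.mod_eq_of_lt hy]
  rw [colorCount, colorCount, ← card_product]
  -- Since `n = 2 * d + 1`, one of the two forward distances between `x` and `y` is at most `d`.
  refine card_le_card_of_injOn (fun p => if (p.2 + (n - p.1)) % n ≤ d
    then (p.1, (p.2 + (n - p.1)) % n) else (p.2, (p.1 + (n - p.2)) % n)) ?_ ?_
  · rintro ⟨x, y⟩ hp
    simp only [coe_product, coe_filter, mem_range, Set.mem_prod, Set.mem_ofPred_eq] at hp
    obtain ⟨⟨hx, hcx⟩, hy, hcy⟩ := hp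
    have hxy : x ≠ y := by
      rintro rfl
      exact hij (hcx.symm.trans hcy)
    simp only [mem_coe]
    split_ifs with h
    · rw [mem_crossPairs, hfwd hx hy, hcx, hcy]
      refine ⟨hx, ?_, h, hij⟩
      rw [Nat.add_mod_of_lt_of_le hy (by omega)]
      split_ifs <;> omega
    · rw [mem_crossPairs, hfwd hy hx, hcx, hcy]
      refine ⟨hy, ?_, ?_, hij.symm⟩ <;>
        rw [Nat.add_mod_of_lt_of_le hx (by omega)] <;>
        rw [Nat.add_mod_of_lt_of_le hy (by omega)] at h <;>
        split_ifs at h ⊢ <;> omega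
  · rintro ⟨x, y⟩ hp ⟨x', y'⟩ hp' h
    simp only [coe_product, coe_filter, mem_range, Set.mem_prod, Set.mem_ofPred_eq] at hp hp'
    have hne {u v : ℕ} (hu : c u = i) (hv : c v = j) : u ≠ v := by
      rintro rfl
      exact hij (hu.symm.trans hv)
    have := hne hp.1.2 hp'.2.2
    have := hne hp'.1.2 hp.2.2
    simp only [Nat.add_mod_of_lt_of_le hp.1.1 (Nat.sub_le n _),
      Nat.add_mod_of_lt_of_le hp.2.1 (Nat.sub_le n _),
      Nat.add_mod_of_lt_of_le hp'.1.1 (Nat.sub_le n _),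
      Nat.add_mod_of_lt_of_le hp'.2.1 (Nat.sub_le n _)] at h
    split_ifs at h <;> simp only [Prod.mk.injEq] at h ⊢ <;> omega

end CyclicWord

lemma colorCount_zero_add_colorCount_one (n : ℕ) (c : ℕ → Fin 2) :
    colorCount n c 0 + colorCount n c 1 = n := by
  have h1 : colorCount n c 1 = #{x ∈ range n | ¬c x = 0} := by
    simp only [colorCount, Fin.ext_iff]
    congr! 3 with x
    omega
  rw [h1, colorCount, card_filter_add_card_filter_not, card_range]

theorem le_card_crossPairs {d n : ℕ} (hn : 2 * d + 1 ≤ n) (c : ℕ → Fin 2)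
    (hc : ∀ i, d ≤ colorCount n c i) : d * (d + 1) ≤ #(crossPairs n d c) := by
  induction n, hn using Nat.le_induction generalizing c with
  | base =>
    have hmul := colorCount_mul_colorCount_le_card_crossPairs d c (i := 0) (j := 1) (by decide)
    have hsum := colorCount_zero_add_colorCount_one (2 * d + 1) c
    obtain ⟨a, ha⟩ := Nat.exists_eq_add_of_le (hc 0)
    obtain ⟨b, hb⟩ := Nat.exists_eq_add_of_le (hc 1)
    rw [ha, hb] at hmul hsum
    nlinarith
  | succ n hn ih =>
    obtain ⟨i, hi⟩ : ∃ i, d + 1 ≤ colorCount (n + 1) c i := by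
      have := colorCount_zero_add_colorCount_one (n + 1) c
      by_cases h : d + 1 ≤ colorCount (n + 1) c 0
      exacts [⟨0, h⟩, ⟨1, by omega⟩]
    obtain ⟨p, hp, hcp⟩ := exists_lt_eq_of_colorCount_pos ((Nat.succ_pos d).trans_le hi)
    set c' : ℕ → Fin 2 := fun x => c ((x + (p + 1)) % (n + 1))
    have hc'n : c' n = i := by
      simp only [c']
      rw [← hcp, show n + (p + 1) = p + (n + 1) by omega, Nat.add_mod_right, Nat.mod_eq_of_lt hp]
    have hc' : ∀ j, d ≤ colorCount n c' j := by
      intro j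
      have hsucc := colorCount_succ n c' j
      rw [colorCount_rotate (by omega), hc'n] at hsucc
      by_cases hij : i = j
      · subst hij
        rw [if_pos rfl] at hsucc
        omega
      · rw [if_neg hij] at hsucc
        have := hc j
        omega
    calc d * (d + 1) ≤ #(crossPairs n d c') := ih c' hc'
      _ ≤ #(crossPairs (n + 1) d c') := card_crossPairs_le_succ (by omega) c'
      _ = #(crossPairs (n + 1) d c) := card_crossPairs_rotate (by omega) c

lemma colorCount_natCast {α : Type*} [DecidableEq α] {n : ℕ} [NeZero n] (f : ZMod n → α) (i : α) :
    colorCount n (fun x => f x) i = Nat.card {v | f v = i} := by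
  classical
  rw [Nat.card_coe_set_eq, Set.ncard_eq_toFinset_card', Set.toFinset_ofPred]
  refine card_nbij' Nat.cast ZMod.val ?_ ?_ ?_ ?_ <;> intro x hx <;>
    simp only [coe_filter, mem_range, mem_univ, true_and, Set.mem_ofPred_eq] at hx ⊢
  · exact hx.2
  · exact ⟨ZMod.val_lt x, by rwa [ZMod.natCast_zmod_val]⟩
  · exact ZMod.val_cast_of_lt hx.1
  · exact ZMod.natCast_zmod_val x

lemma card_crossPairs_le_mixedCount {n d : ℕ} (hd : 2 * d < n) (f : ZMod n → Fin 2) :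
    #(crossPairs n d fun x => f x) ≤ mixedCount (cyclePow n d) f := by
  have : NeZero n := ⟨by omega⟩
  have hk {k : ℕ} (hk1 : 1 ≤ k) (hk2 : k < n) : (k : ZMod n) ≠ 0 := by
    rw [Ne, ZMod.natCast_eq_zero_iff]
    exact fun h => (Nat.le_of_dvd (by omega) h).not_gt hk2
  rw [mixedCount, Set.ncard_eq_toFinset_card _ (Set.toFinite _)]
  refine card_le_card_of_injOn (fun p => s((p.1 : ZMod n), p.1 + p.2)) ?_ ?_
  · rintro ⟨x, k⟩ hp
    rw [mem_coe, mem_crossPairs] at hp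
    obtain ⟨hx, hk1, hkd, hc⟩ := hp
    simp only [mem_coe, Set.Finite.mem_toFinset, bichromatic, Set.mem_ofPred_eq,
      SimpleGraph.mem_edgeSet, Sym2.lift_mk]
    refine ⟨⟨fun h => hk hk1 (by omega) ?_, k, hk1, hkd, Or.inl rfl⟩, ?_⟩
    · simpa using h.symm
    · simpa [ZMod.natCast_mod] using hc
  · rintro ⟨x, k⟩ hp ⟨y, l⟩ hq h
    rw [mem_coe, mem_crossPairs] at hp hq
    simp only [Sym2.eq_iff] at h
    rcases h with ⟨hxy, hkl⟩ | ⟨hxy, hyx⟩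
    · rw [ZMod.natCast_eq_natCast_iff_of_lt hp.1 hq.1] at hxy
      subst hxy
      rw [add_right_inj, ZMod.natCast_eq_natCast_iff_of_lt (by omega) (by omega)] at hkl
      rw [hkl]
    · refine absurd ?_ (hk (k := k + l) (by omega) (by omega))
      rw [← hyx, add_assoc, left_eq_add] at hxy
      push_cast
      exact hxy

lemma exists_balancedColoring_zmod (n : ℕ) [NeZero n] : ∃ f : ZMod n → Fin 2, BalancedColoring f := by
  refine ⟨fun v => if v.val < n / 2 then 0 else 1, ?_⟩
  have h0 : colorCount n (fun x : ℕ => if (x : ZMod n).val < n / 2 then (0 : Fin 2) else 1) 0 =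
      n / 2 := by
    rw [colorCount]
    convert card_range (n / 2) using 2
    ext x
    by_cases hx : x < n
    · simp only [mem_filter, mem_range, ZMod.val_cast_of_lt hx, ite_eq_left_iff, hx, true_and]
      omega
    · simp only [mem_filter, mem_range, hx, false_and, false_iff]
      omega
  have hsum := colorCount_zero_add_colorCount_one n
    fun x : ℕ => if (x : ZMod n).val < n / 2 then (0 : Fin 2) else 1
  rw [BalancedColoring, ← colorCount_natCast, ← colorCount_natCast]
  omega

lemma le_rna {V : Type*} (G : SimpleGraph V) {k : ℕ} (hne : ∃ f : V → Fin 2, BalancedColoring f)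
    (h : ∀ f, BalancedColoring f → k ≤ mixedCount G f) : k ≤ rna G := by
  obtain ⟨f₀, hf₀⟩ := hne
  exact le_csInf ⟨_, f₀, hf₀, rfl⟩ (by rintro _ ⟨f, hf, rfl⟩; exact h f hf)

theorem stmt3_general (d n : ℕ) (hn : 2 * d + 1 ≤ n) :
    d * (d + 1) ≤ rna (cyclePow n d) := by
  have : NeZero n := ⟨by omega⟩
  refine le_rna _ (exists_balancedColoring_zmod n) fun f hf => ?_
  have hcount : ∀ i, d ≤ colorCount n (fun x => f x) i := by
    rw [BalancedColoring, ← colorCount_natCast, ← colorCount_natCast] at hf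
    have := colorCount_zero_add_colorCount_one n fun x => f x
    rw [Fin.forall_fin_two]
    omega
  exact (le_card_crossPairs hn _ hcount).trans (card_crossPairs_le_mixedCount (by omega) f)

theorem stmt3 (d n : ℕ) (hd : 2 ≤ d) (hn : 2 * d + 1 ≤ n) :
    d * (d + 1) ≤ rna (cyclePow n d) :=
  stmt3_general d n hn
end

section
/- For every n ≥ 5, σ⁻¹(C_n^2) = 6. -/
/-!
Write `B = jumps 1 f` for the set of `i` with `f i ≠ f (i + 1)` and `C = jumps 2 f` for those with
`f i ≠ f (i + 2)`. For `n ≥ 5` the edges `s(i, i + 1)` and `s(i, i + 2)` are pairwise distinct, so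
`f` cuts `|B| + |C|` edges of `C_n^2`. Over `𝔽₂`, `f (i + 2) - f i` is the sum of the two steps in
between, so `i ∈ C` iff exactly one of `i`, `i + 1` lies in `B`: hence `|C| ≤ 2 |B|`, with equality
when `B` has no two consecutive points.

`|B|` is even, and positive for a balanced colouring. If `|B| ≤ 4` then `B ≠ ℤ/n`, so `B` has
an entry and an exit point, both in `C`, which settles `|B| = 4`. If `|B| = 2`, either
`B = {x, x + 1}`, which leaves `x + 1` alone in its colour class, or `|C| = 2 |B| = 4`. Colouring
two arcs of lengths `⌈n/2⌉` and `⌊n/2⌋` gives `|B| = 2` and so at most `6` cut edges.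
-/

open Finset

section Jumps

variable {G α : Type*} [AddGroup G] [Fintype G] [DecidableEq α]

def jumps (k : G) (f : G → α) : Finset G := {i | f i ≠ f (i + k)}

@[simp]
lemma mem_jumps {k i : G} {f : G → α} : i ∈ jumps k f ↔ f i ≠ f (i + k) := by
  simp [jumps]

lemma even_card_jumps (k : G) (f : G → Fin 2) : Even #(jumps k f) := by
  classical
  set g : G → ZMod 2 := fun i => (f i).val
  have hsum : ∑ i, (g (i + k) - g i) = 0 := by
    rw [sum_sub_distrib, sub_eq_zero]
    exact Fintype.sum_equiv (Equiv.addRight k) _ _ fun _ => rfl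
  have hterm : ∀ i, g (i + k) - g i = if i ∈ jumps k f then 1 else 0 := by
    have : ∀ a b : Fin 2, (b.val : ZMod 2) - a.val = if a ≠ b then 1 else 0 := by decide
    intro i
    simp only [g, mem_jumps, this]
  rw [sum_congr rfl fun i _ => hterm i, sum_boole, filter_univ_mem,
    ZMod.natCast_eq_zero_iff] at hsum
  exact even_iff_two_dvd.mpr hsum

lemma mem_jumps_add_self {k i : G} {f : G → Fin 2} :
    i ∈ jumps (k + k) f ↔ (i ∈ jumps k f ↔ i + k ∉ jumps k f) := by
  simp only [mem_jumps, ← add_assoc]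
  generalize f i = a; generalize f (i + k) = b; generalize f (i + k + k) = c
  revert a b c; decide

lemma card_jumps_add_self_le [DecidableEq G] (k : G) (f : G → Fin 2) :
    #(jumps (k + k) f) ≤ 2 * #(jumps k f) := by
  have hsub : jumps (k + k) f ⊆ jumps k f ∪ (jumps k f).image (· - k) := by
    intro i hi
    rw [mem_jumps_add_self] at hi
    rw [mem_union, mem_image]
    by_cases hik : i ∈ jumps k f
    · exact .inl hik
    · exact .inr ⟨i + k, not_not.mp (hi.not.mp hik), add_sub_cancel_right i k⟩
  calc #(jumps (k + k) f) ≤ #(jumps k f ∪ (jumps k f).image (· - k)) := card_le_card hsub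
    _ ≤ #(jumps k f) + #(jumps k f) := (card_union_le _ _).trans (add_le_add_right card_image_le _)
    _ = 2 * #(jumps k f) := (two_mul _).symm

lemma two_mul_card_jumps_le [DecidableEq G] {k : G} {f : G → Fin 2}
    (hsep : ∀ i ∈ jumps k f, i + k ∉ jumps k f) : 2 * #(jumps k f) ≤ #(jumps (k + k) f) := by
  have hdisj : Disjoint (jumps k f) ((jumps k f).image (· - k)) := by
    rw [disjoint_left]
    rintro i hi hi'
    obtain ⟨j, hj, rfl⟩ := mem_image.mp hi'
    exact hsep _ hi (by rwa [sub_add_cancel])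
  have hsub : jumps k f ∪ (jumps k f).image (· - k) ⊆ jumps (k + k) f := by
    intro i hi
    rw [mem_jumps_add_self]
    rcases mem_union.mp hi with hi | hi
    · exact iff_of_true hi (hsep i hi)
    · obtain ⟨j, hj, rfl⟩ := mem_image.mp hi
      rw [sub_add_cancel]
      exact iff_of_false (fun h => hsep _ h (by rwa [sub_add_cancel])) (not_not.mpr hj)
  calc 2 * #(jumps k f) = #(jumps k f ∪ (jumps k f).image (· - k)) := by
        rw [card_union_of_disjoint hdisj, card_image_of_injective _ (sub_left_injective), two_mul]
    _ ≤ #(jumps (k + k) f) := card_le_card hsub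

end Jumps

section Cycle

variable {n : ℕ} [NeZero n]

lemma ZMod.forall_of_add_one {p : ZMod n → Prop} {a : ZMod n} (ha : p a)
    (h : ∀ i, p i → p (i + 1)) (i : ZMod n) : p i := by
  have hwalk : ∀ k : ℕ, p (a + k) := by
    intro k
    induction k with
    | zero => simpa using ha
    | succ k ih => simpa [add_assoc] using h _ ih
  simpa using hwalk (i - a).val

lemma ZMod.exists_and_not_add_one {p : ZMod n → Prop} {a b : ZMod n} (ha : p a) (hb : ¬p b) :
    ∃ i, p i ∧ ¬p (i + 1) := by
  by_contra! h
  exact hb (ZMod.forall_of_add_one ha h b)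

lemma eq_of_jumps_one_subset_singleton {α : Type*} [DecidableEq α] {f : ZMod n → α}
    {z : ZMod n} (h : jumps 1 f ⊆ {z}) (i : ZMod n) : f i = f z := by
  have hconst : ∀ i, f i = f (z + 1) := by
    refine ZMod.forall_of_add_one (p := fun i => f i = f (z + 1)) rfl fun i hi => ?_
    by_cases hiz : i = z
    · rw [hiz]
    · rw [← hi]
      by_contra hne
      exact hiz (mem_singleton.mp (h (mem_jumps.mpr (Ne.symm hne))))
  rw [hconst i, hconst z]

lemma jumps_one_nonempty {α : Type*} [DecidableEq α] {f : ZMod n → α} {u v : ZMod n}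
    (huv : f u ≠ f v) : (jumps 1 f).Nonempty := by
  rw [nonempty_iff_ne_empty]
  intro h
  have hconst := eq_of_jumps_one_subset_singleton (h ▸ empty_subset {0})
  exact huv ((hconst u).trans (hconst v).symm)

lemma two_le_card_jumps_two {f : ZMod n → Fin 2} (hne : (jumps 1 f).Nonempty)
    (hB : jumps 1 f ≠ univ) : 2 ≤ #(jumps 2 f) := by
  obtain ⟨a, ha⟩ := hne
  obtain ⟨b, hb⟩ := not_forall.mp fun h => hB (eq_univ_of_forall h)
  obtain ⟨i, hi, hi'⟩ := ZMod.exists_and_not_add_one (p := (· ∈ jumps 1 f)) ha hb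
  obtain ⟨j, hj, hj'⟩ := ZMod.exists_and_not_add_one (p := (· ∉ jumps 1 f)) hb (not_not.mpr ha)
  rw [← one_add_one_eq_two (R := ZMod n)]
  refine one_lt_card.mpr ⟨i, ?_, j, ?_, fun hij => hj (hij ▸ hi)⟩
  · exact mem_jumps_add_self.mpr (iff_of_true hi hi')
  · exact mem_jumps_add_self.mpr (iff_of_false hj hj')

lemma natCard_setOf_eq_le_one_of_jumps_eq_pair {f : ZMod n → Fin 2} {x : ZMod n}
    (h : jumps 1 f = {x, x + 1}) : Nat.card {v | f v = f (x + 1)} ≤ 1 := by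
  have hx : f x ≠ f (x + 1) := mem_jumps.mp (h ▸ mem_insert_self _ _)
  have hx1 : f (x + 1) ≠ f (x + 1 + 1) := mem_jumps.mp (h ▸ by simp)
  have hx2 : f (x + 1 + 1) = f x := by
    generalize f x = a at hx hx1; generalize f (x + 1) = b at hx hx1
    generalize f (x + 1 + 1) = c at hx1
    revert a b c; decide
  have hne : x ≠ x + 1 := fun e => hx (congrArg f e)
  have hne' : x + 1 + 1 ≠ x + 1 := fun e => hx1 (congrArg f e.symm)
  -- recolouring the lone vertex `x + 1` removes both jumps
  set g := Function.update f (x + 1) (f x)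
  have hg : jumps 1 g ⊆ {x} := by
    intro i hi
    rw [mem_singleton]
    by_contra hix
    apply mem_jumps.mp hi
    by_cases hi1 : i = x + 1
    · simp [g, hi1, Function.update_of_ne hne', hx2]
    · have hi1' : i + 1 ≠ x + 1 := fun e => hix (add_right_cancel e)
      simp only [g, Function.update_of_ne hi1, Function.update_of_ne hi1']
      by_contra hfi
      have := h ▸ mem_jumps.mpr hfi
      simp only [mem_insert, mem_singleton] at this
      tauto
  have hsub : {v | f v = f (x + 1)} ⊆ {x + 1} := by
    intro v hv
    by_contra hvx
    have := eq_of_jumps_one_subset_singleton hg v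
    simp only [g, Function.update_of_ne hvx, Function.update_of_ne hne] at this
    exact hx (this ▸ hv)
  simpa using Nat.card_mono (Set.finite_singleton _) hsub

end Cycle

section Balanced

variable {V : Type*} [Finite V]

lemma natCard_setOf_eq_zero_add_natCard_setOf_eq_one (f : V → Fin 2) :
    Nat.card {v | f v = 0} + Nat.card {v | f v = 1} = Nat.card V := by
  have hcompl : {v | f v = 1} = {v | f v = 0}ᶜ := by
    ext v
    change f v = 1 ↔ ¬f v = 0
    generalize f v = a
    revert a; decide
  rw [hcompl, Nat.card_coe_set_eq, Nat.card_coe_set_eq, Set.ncard_add_ncard_compl]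

lemma BalancedColoring.card_le {f : V → Fin 2} (hf : BalancedColoring f) (c : Fin 2) :
    Nat.card V ≤ 2 * Nat.card {v | f v = c} + 1 := by
  have := natCard_setOf_eq_zero_add_natCard_setOf_eq_one f
  obtain ⟨h₁, h₂⟩ := hf
  fin_cases c <;> simp only [Fin.zero_eta, Fin.mk_one] <;> omega

lemma BalancedColoring.of_card_eq {f : V → Fin 2}
    (h : Nat.card {v | f v = 0} = (Nat.card V + 1) / 2) : BalancedColoring f := by
  have := natCard_setOf_eq_zero_add_natCard_setOf_eq_one f
  constructor <;> omega

end Balanced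

def blockColoring (n m : ℕ) : ZMod n → Fin 2 := fun v => if v.val < m then 0 else 1

section BlockColoring

variable {n : ℕ} [NeZero n]

lemma natCard_setOf_blockColoring_eq_zero {m : ℕ} (hm : m ≤ n) :
    Nat.card {v | blockColoring n m v = 0} = m := by
  have hset : {v | blockColoring n m v = 0} = ((↑) : ℕ → ZMod n) '' Set.Iio m := by
    ext v
    simp only [blockColoring, Set.mem_ofPred_eq, Set.mem_image, Set.mem_Iio]
    constructor
    · intro hv
      exact ⟨v.val, by split_ifs at hv with h <;> simp_all, ZMod.natCast_zmod_val v⟩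
    · rintro ⟨k, hk, rfl⟩
      simp [ZMod.val_cast_of_lt (hk.trans_le hm), hk]
  have hinj : Set.InjOn ((↑) : ℕ → ZMod n) (Set.Iio m) := fun a ha b hb hab => by
    simpa [ZMod.val_cast_of_lt ((Set.mem_Iio.mp ha).trans_le hm),
      ZMod.val_cast_of_lt ((Set.mem_Iio.mp hb).trans_le hm)] using congrArg ZMod.val hab
  rw [hset, Nat.card_coe_set_eq, hinj.ncard_image, Set.ncard_eq_toFinset_card']
  simp

lemma jumps_one_blockColoring_subset (m : ℕ) :
    jumps 1 (blockColoring n m) ⊆ {((m - 1 : ℕ) : ZMod n), -1} := by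
  intro i hi
  rw [mem_jumps] at hi
  rw [mem_insert, mem_singleton]
  have hval : ((i.val : ℕ) : ZMod n) = i := ZMod.natCast_zmod_val i
  rcases Nat.lt_or_ge (i.val + 1) n with hlt | hge
  · have hsucc : (i + 1).val = i.val + 1 := by
      simpa only [Nat.cast_add_one, hval] using ZMod.val_cast_of_lt hlt
    left
    rw [← hval]
    congr 1
    simp only [blockColoring, hsucc] at hi
    split_ifs at hi <;> omega
  · right
    rw [eq_neg_iff_add_eq_zero, ← hval, ← Nat.cast_add_one,
      show i.val + 1 = n by have := ZMod.val_lt i; omega, ZMod.natCast_self]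

end BlockColoring

lemma injOn_sym2_mk_add_natCast {n d : ℕ} (hd : 2 * d < n) :
    Set.InjOn (fun p : ZMod n × ℕ => s(p.1, p.1 + (p.2 : ZMod n))) (Set.univ ×ˢ Set.Icc 1 d) := by
  rintro ⟨i, k⟩ ⟨-, hk1, hk2⟩ ⟨j, l⟩ ⟨-, hl1, hl2⟩ he
  dsimp only at hk1 hk2 hl1 hl2 he
  obtain ⟨rfl, h⟩ | ⟨rfl, h⟩ := Sym2.eq_iff.mp he
  · have hkl := add_left_cancel h
    rw [ZMod.natCast_eq_natCast_iff', Nat.mod_eq_of_lt (by omega),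
      Nat.mod_eq_of_lt (by omega)] at hkl
    rw [hkl]
  · have hsum : ((l + k : ℕ) : ZMod n) = 0 := by
      push_cast
      exact add_left_cancel (a := j) (by rw [← add_assoc, h, add_zero])
    have := Nat.le_of_dvd (by omega) ((ZMod.natCast_eq_zero_iff _ _).mp hsum)
    omega

lemma mixedCount_cyclePow {n d : ℕ} [NeZero n] (hd : 2 * d < n) (f : ZMod n → Fin 2) :
    mixedCount (cyclePow n d) f = ∑ k ∈ Icc 1 d, #(jumps (k : ZMod n) f) := by
  classical
  set P := ((univ : Finset (ZMod n)) ×ˢ Icc 1 d).filter fun p => f p.1 ≠ f (p.1 + (p.2 : ZMod n))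
  have hset : bichromatic (cyclePow n d) f = ↑(P.image fun p => s(p.1, p.1 + (p.2 : ZMod n))) := by
    ext e
    induction e using Sym2.ind with
    | _ u v =>
    simp only [bichromatic, cyclePow, Set.mem_ofPred_eq, SimpleGraph.mem_edgeSet, Sym2.lift_mk,
      coe_image, Set.mem_image, mem_coe, P, mem_filter, mem_product, mem_univ, mem_Icc, true_and,
      Prod.exists]
    constructor
    · rintro ⟨⟨-, j, hj1, hj2, rfl | rfl⟩, hne⟩
      · exact ⟨u, j, ⟨⟨hj1, hj2⟩, hne⟩, rfl⟩
      · exact ⟨v, j, ⟨⟨hj1, hj2⟩, hne.symm⟩, Sym2.eq_swap⟩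
    · rintro ⟨i, k, ⟨⟨hk1, hk2⟩, hne⟩, he⟩
      rcases Sym2.eq_iff.mp he with ⟨rfl, rfl⟩ | ⟨rfl, rfl⟩
      · exact ⟨⟨fun h => hne (congrArg f h), k, hk1, hk2, .inl rfl⟩, hne⟩
      · exact ⟨⟨fun h => hne (congrArg f h.symm), k, hk1, hk2, .inr rfl⟩, hne.symm⟩
  have hinj : Set.InjOn (fun p : ZMod n × ℕ => s(p.1, p.1 + (p.2 : ZMod n))) ↑P :=
    (injOn_sym2_mk_add_natCast hd).mono fun p hp => by
      simpa [P] using (mem_filter.mp hp).1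
  rw [mixedCount, hset, Set.ncard_coe_finset, card_image_of_injOn hinj, card_filter,
    sum_product_right]
  simp only [jumps, card_filter]

lemma mixedCount_cyclePow_two {n : ℕ} [NeZero n] (hn : 5 ≤ n) (f : ZMod n → Fin 2) :
    mixedCount (cyclePow n 2) f = #(jumps 1 f) + #(jumps 2 f) := by
  rw [mixedCount_cyclePow (by omega)]
  simp [sum_Icc_succ_top]

lemma six_le_card_jumps_one_add_card_jumps_two {n : ℕ} [NeZero n] (hn : 5 ≤ n)
    {f : ZMod n → Fin 2} (hf : BalancedColoring f) : 6 ≤ #(jumps 1 f) + #(jumps 2 f) := by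
  have hclass : ∀ c, 2 ≤ Nat.card {v | f v = c} := fun c => by
    have := hf.card_le c
    rw [Nat.card_zmod] at this
    omega
  obtain ⟨⟨u, hu⟩⟩ := (Nat.card_pos_iff.mp (two_pos.trans_le (hclass 0))).1
  obtain ⟨⟨v, hv⟩⟩ := (Nat.card_pos_iff.mp (two_pos.trans_le (hclass 1))).1
  have hB : (jumps 1 f).Nonempty := jumps_one_nonempty (u := u) (v := v) <| by
    rw [show f u = 0 from hu, show f v = 1 from hv]
    decide
  obtain ⟨b, hb⟩ := even_card_jumps 1 f
  rcases le_or_gt 6 #(jumps 1 f) with h6 | h6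
  · omega
  have htwo : 2 ≤ #(jumps 2 f) := two_le_card_jumps_two hB fun h => by
    rw [h, card_univ, ZMod.card] at h6 hb
    omega
  by_cases hsep : ∀ i ∈ jumps 1 f, i + 1 ∉ jumps 1 f
  · have := two_mul_card_jumps_le hsep
    rw [one_add_one_eq_two] at this
    have := card_pos.mpr hB
    omega
  · push Not at hsep
    obtain ⟨x, hx, hx1⟩ := hsep
    have hne : x ≠ x + 1 := fun e => mem_jumps.mp hx (congrArg f e)
    rcases (show #(jumps 1 f) = 2 ∨ #(jumps 1 f) = 4 by have := card_pos.mpr hB; omega)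
      with hcard | hcard
    · have hpair : jumps 1 f = {x, x + 1} :=
        (eq_of_subset_of_card_le (insert_subset hx (singleton_subset_iff.mpr hx1))
          (by rw [card_pair hne, hcard])).symm
      have := hclass (f (x + 1))
      have := natCard_setOf_eq_le_one_of_jumps_eq_pair hpair
      omega
    · omega

theorem stmt13 (n : ℕ) (hn : 5 ≤ n) : rna (cyclePow n 2) = 6 := by
  have : NeZero n := ⟨by omega⟩
  set f₀ := blockColoring n ((n + 1) / 2)
  have hf₀ : BalancedColoring f₀ := .of_card_eq <| by
    rw [natCard_setOf_blockColoring_eq_zero (by omega), Nat.card_zmod]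
  have hjumps : #(jumps 1 f₀) ≤ 2 :=
    (card_le_card (jumps_one_blockColoring_subset _)).trans card_le_two
  apply le_antisymm
  · calc rna (cyclePow n 2) ≤ mixedCount (cyclePow n 2) f₀ := Nat.sInf_le ⟨f₀, hf₀, rfl⟩
      _ = #(jumps 1 f₀) + #(jumps (1 + 1) f₀) := by
        rw [mixedCount_cyclePow_two hn, one_add_one_eq_two]
      _ ≤ 6 := by have := card_jumps_add_self_le 1 f₀; omega
  · refine le_csInf ⟨_, f₀, hf₀, rfl⟩ ?_
    rintro _ ⟨f, hf, rfl⟩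
    rw [mixedCount_cyclePow_two hn]
    exact six_le_card_jumps_one_add_card_jumps_two hn hf
end
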